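/- Let G = (V,E) be a finite directed graph with |V| = n, and let f ≥ 1 and l ≥ 1 be integers with n ≥ f+2. If G is (f+1)-strictly robust with l hops under the f-total model, then n ≥ 3f+1. -/

import Mathlib

/-!  Common definitions: multi-hop robustness notions for finite directed graphs,
following Yuan & Ishii, "Asynchronous Approximate Byzantine Consensus".

A directed graph on vertex type `V` is given by its edge relation `E : V → V → Prop`,
where `E j i` means `(j,i)` is an edge (node `i` can receive information from `j`). -/

/-- `p` is an at-most-`l`-hop path from `j` to `i`: a list of distinct vertices,
consecutive ones joined by edges, starting at `j`, ending at `i`, with at least one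
edge (length ≥ 2 as a vertex list) and at most `l` edges (length ≤ l+1). -/
def IsHopPath {V : Type*} (E : V → V → Prop) (l : ℕ) (j i : V) (p : List V) : Prop :=
  p.Nodup ∧ p.Chain' E ∧ p.head? = some j ∧ p.getLast? = some i ∧
    2 ≤ p.length ∧ p.length ≤ l + 1

/-- The intermediate nodes of a path: all vertices except the first and the last. -/
def interm {V : Type*} (p : List V) : List V := p.tail.dropLast

/-- Node `i` is in `Z^r_S` with respect to `F`: `i ∈ S` and there are `r` pairwise
independent paths of at most `l` hops, each starting outside `S` and ending at `i`,
none of which has an intermediate node in `F`.  Independence means that two distinct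
paths share no vertex other than `i`. -/
def MemZ {V : Type*} (E : V → V → Prop) (l : ℕ) (F S : Set V) (r : ℕ) (i : V) : Prop :=
  i ∈ S ∧ ∃ P : Fin r → List V,
    (∀ a, ∃ j, j ∉ S ∧ IsHopPath E l j i (P a)) ∧
    (∀ a, ∀ v ∈ interm (P a), v ∉ F) ∧
    (∀ a b, a ≠ b → ∀ v, v ∈ P a → v ∈ P b → v = i)

/-- The set `Z^r_S` with respect to `F`. -/
def ZSet {V : Type*} (E : V → V → Prop) (l : ℕ) (F S : Set V) (r : ℕ) : Set V :=
  {i | MemZ E l F S r i}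

/-- `(r,s)`-robustness with `l` hops with respect to `F`, where the nonempty disjoint
subsets range over subsets of a ground vertex set `W` (used for induced subgraphs). -/
def RSRobustOn {V : Type*} (E : V → V → Prop) (W : Set V) (l r s : ℕ) (F : Set V) : Prop :=
  ∀ V1 V2 : Set V, V1 ⊆ W → V2 ⊆ W → V1.Nonempty → V2.Nonempty → Disjoint V1 V2 →
    ZSet E l F V1 r = V1 ∨ ZSet E l F V2 r = V2 ∨
      s ≤ (ZSet E l F V1 r).ncard + (ZSet E l F V2 r).ncard

/-- `G = (V,E)` is `(r,s)`-robust with `l` hops with respect to `F`. -/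
def RSRobust {V : Type*} (E : V → V → Prop) (l r s : ℕ) (F : Set V) : Prop :=
  RSRobustOn E Set.univ l r s F

/-- The edge relation of the subgraph of `E` induced by the vertex set `W`. -/
def induced {V : Type*} (E : V → V → Prop) (W : Set V) : V → V → Prop :=
  fun j i => E j i ∧ j ∈ W ∧ i ∈ W

/-- `G` is `r`-strictly robust with `l` hops with respect to `F`: the subgraph of `G`
induced by `V ∖ F` is `r`-robust (i.e. `(r,1)`-robust) with `l` hops with respect to `F`. -/
def StrictRobust {V : Type*} (E : V → V → Prop) (l r : ℕ) (F : Set V) : Prop :=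
  RSRobustOn (induced E Fᶜ) Fᶜ l r 1 F

/-- `F` is an `f`-total set: it contains at most `f` nodes. -/
def FTotal {V : Type*} (f : ℕ) (F : Set V) : Prop := F.ncard ≤ f

/-- `F` is `f`-local (in `l`-hop neighbors): every node outside `F` has at most `f`
nodes of `F` among the nodes from which it is reachable by a path of at most `l` hops. -/
def FLocal {V : Type*} (E : V → V → Prop) (l f : ℕ) (F : Set V) : Prop :=
  ∀ i, i ∉ F → {j ∈ F | ∃ p, IsHopPath E l j i p}.ncard ≤ f

/- Delete `f` nodes. The remaining `m ≤ 2f` nodes split into two nonempty halves of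
at most `f` nodes each. In the induced subgraph every path into one half starts in the other, and
independent paths have distinct sources, so no node has `f + 1` independent paths from outside
its half: both `Z`-sets are empty and the split violates `(f+1)`-robustness. -/

theorem Finset.exists_split_card_le {α : Type*} [DecidableEq α] {s : Finset α} {k : ℕ}
    (h2 : 2 ≤ s.card) (hk : s.card ≤ 2 * k) :
    ∃ t ⊆ s, t.Nonempty ∧ (s \ t).Nonempty ∧ t.card ≤ k ∧ (s \ t).card ≤ k := by
  obtain ⟨t, hts, ht⟩ := Finset.exists_subset_card_eq (show s.card / 2 ≤ s.card by omega)
  have hst : (s \ t).card = s.card - s.card / 2 := by rw [Finset.card_sdiff_of_subset hts, ht]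
  refine ⟨t, hts, ?_, ?_, by omega, by omega⟩
  · rw [← Finset.card_pos]; omega
  · rw [← Finset.card_pos]; omega

section

variable {V : Type*} {E : V → V → Prop} {l r : ℕ} {F S W : Set V} {i j : V} {p : List V}

theorem IsHopPath.head_mem (hp : IsHopPath E l j i p) : j ∈ p :=
  List.mem_of_mem_head? hp.2.2.1

theorem IsHopPath.source_mem_of_induced (hp : IsHopPath (induced E W) l j i p) : j ∈ W := by
  obtain ⟨-, hchain, hhead, -, hlen, -⟩ := hp
  match p, hchain, hhead, hlen with
  | _ :: _ :: _, hchain, hhead, _ =>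
    obtain rfl : _ = j := by simpa using hhead
    exact (List.isChain_cons_cons.mp hchain).1.2.1

theorem MemZ.exists_injective_sources (hi : MemZ E l F S r i) :
    ∃ src : Fin r → V, Function.Injective src ∧
      ∀ a, src a ∉ S ∧ ∃ p, IsHopPath E l (src a) i p := by
  obtain ⟨hiS, P, hpaths, -, hindep⟩ := hi
  choose src hsrcS hsrcPath using hpaths
  refine ⟨src, fun a b hab => ?_, fun a => ⟨hsrcS a, P a, hsrcPath a⟩⟩
  by_contra hne
  have hsrc_eq : src a = i :=
    hindep a b hne _ (hsrcPath a).head_mem (hab ▸ (hsrcPath b).head_mem)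
  exact hsrcS a (hsrc_eq ▸ hiS)

theorem MemZ.le_encard_diff_of_induced (hi : MemZ (induced E W) l F S r i) :
    (r : ℕ∞) ≤ (W \ S).encard := by
  obtain ⟨src, hinj, hsrc⟩ := hi.exists_injective_sources
  have hmaps : Set.MapsTo src Set.univ (W \ S) := fun a _ =>
    ⟨(hsrc a).2.choose_spec.source_mem_of_induced, (hsrc a).1⟩
  simpa using Set.encard_le_encard_of_injOn hmaps hinj.injOn

theorem zSet_induced_eq_empty (h : (W \ S).encard < r) : ZSet (induced E W) l F S r = ∅ :=
  Set.eq_empty_of_forall_notMem fun _ hi => (h.trans_le hi.le_encard_diff_of_induced).false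

theorem not_rsRobustOn_induced_of_split {s : ℕ} (hs : 0 < s) {A : Set V} (hAW : A ⊆ W)
    (hA : A.Nonempty) (hWA : (W \ A).Nonempty) (hAcard : A.encard < r)
    (hWAcard : (W \ A).encard < r) : ¬ RSRobustOn (induced E W) W l r s F := by
  intro hrob
  have hZA : ZSet (induced E W) l F A r = ∅ := zSet_induced_eq_empty hWAcard
  have hZWA : ZSet (induced E W) l F (W \ A) r = ∅ :=
    zSet_induced_eq_empty (by rwa [Set.sdiff_sdiff_cancel_left hAW])
  rcases hrob A (W \ A) hAW Set.sdiff_subset hA hWA Set.disjoint_sdiff_right with h | h | h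
  · exact hA.ne_empty (hZA ▸ h).symm
  · exact hWA.ne_empty (hZWA ▸ h).symm
  · simp [hZA, hZWA] at h
    omega

end

theorem strict_robust_card_bound_general {V : Type*} [Fintype V] (E : V → V → Prop)
    (f l : ℕ) (hn : f + 2 ≤ Fintype.card V)
    (h : ∀ F : Set V, FTotal f F → StrictRobust E l (f + 1) F) :
    3 * f + 1 ≤ Fintype.card V := by
  classical
  by_contra! hlt
  obtain ⟨F, -, hF⟩ := Finset.exists_subset_card_eq (s := (Finset.univ : Finset V)) (n := f)
    (by simp only [Finset.card_univ]; omega)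
  have hFc : Fᶜ.card = Fintype.card V - f := by rw [Finset.card_compl, hF]
  obtain ⟨A, hAF, hA, hFA, hAcard, hFAcard⟩ :=
    Finset.exists_split_card_le (s := Fᶜ) (k := f) (by omega) (by omega)
  have hrob : StrictRobust E l (f + 1) (F : Set V) := h F (by simp [FTotal, hF])
  rw [StrictRobust, ← Finset.coe_compl] at hrob
  refine not_rsRobustOn_induced_of_split zero_lt_one (Finset.coe_subset.mpr hAF)
    (Finset.coe_nonempty.mpr hA) ?_ ?_ ?_ hrob <;>
    simp only [← Finset.coe_sdiff, Finset.coe_nonempty, Set.encard_coe_eq_coe_finsetCard]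
  · exact hFA
  · exact_mod_cast (show A.card < f + 1 by omega)
  · exact_mod_cast (show (Fᶜ \ A).card < f + 1 by omega)

/-- if `G` with `n ≥ f+2` vertices (`f ≥ 1`) is `(f+1)`-strictly robust
with `l` hops under the `f`-total model, then `n ≥ 3f+1`. -/
theorem strict_robust_card_bound {V : Type*} [Fintype V] (E : V → V → Prop)
    (f l : ℕ) (hf : 1 ≤ f) (hl : 1 ≤ l) (hn : f + 2 ≤ Fintype.card V)
    (h : ∀ F : Set V, FTotal f F → StrictRobust E l (f + 1) F) :
    3 * f + 1 ≤ Fintype.card V :=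
  strict_robust_card_bound_general E f l hn h
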